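/- Assume S and B Bᵀ are positive definite. Then for every positive definite P ∈ ℝ^{d×d}: (i) K(P) B = (P⁻¹ + S)⁻¹ S; (ii) λ_max(R̂(P)) ≤ (λ_max(R₀)/λ_min(B Bᵀ)) · (λ_max(S)/λ_min(S))²; (iii) Tr(Â(P) P Â(P)ᵀ) ≤ Tr(S)/λ_min(S)²; (iv) if moreover P ≥ R in Loewner order, then R̂(P) ≥ (λ_min(R₀) λ_min(S)² / (λ_max(B Bᵀ) λ_max(R⁻¹ + S))) · (R⁻¹ + S)⁻¹. -/

import Mathlib

/-!
Write `M = P⁻¹ + S`. The push-through identity `P Bᵀ (B P Bᵀ + R₀)⁻¹ = M⁻¹ Bᵀ R₀⁻¹` gives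
`K(P) B = M⁻¹ S`, `R̂(P) = M⁻¹ S M⁻¹` and `Â(P) P Â(P)ᵀ = M⁻¹ P⁻¹ M⁻¹`; the rest is Loewner-order
bookkeeping. Conjugating `S ≤ M` and `P⁻¹ ≤ M` by `M⁻¹` bounds both products by
`M⁻¹ ≤ S⁻¹ ≤ λ_min(S)⁻¹ I ≤ λ_min(S)⁻² S`, which gives (ii) and (iii). For (iv),
`(λ_min(S) / λ_max(M)) M ≤ S` conjugated by `M⁻¹`, together with `M⁻¹ ≥ (R⁻¹ + S)⁻¹`, gives the
lower bound. The constants involving `B Bᵀ` enter only through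
`λ_min(B Bᵀ) ≤ λ_max(R₀) λ_max(S)` and `λ_min(R₀) λ_min(S) ≤ λ_max(B Bᵀ)`, both obtained by
comparing `B Bᵀ` with `Bᵀ B` through Cauchy–Schwarz.
-/
open Matrix

noncomputable section

/-- The largest eigenvalue of a symmetric matrix, via the Rayleigh
variational characterization. -/
def lamMax {d : ℕ} (M : Matrix (Fin d) (Fin d) ℝ) : ℝ :=
  sSup {r | ∃ x : Fin d → ℝ, x ⬝ᵥ x = 1 ∧ r = x ⬝ᵥ M.mulVec x}

/-- The smallest eigenvalue of a symmetric matrix, via the Rayleigh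
variational characterization. -/
def lamMin {d : ℕ} (M : Matrix (Fin d) (Fin d) ℝ) : ℝ :=
  sInf {r | ∃ x : Fin d → ℝ, x ⬝ᵥ x = 1 ∧ r = x ⬝ᵥ M.mulVec x}

open scoped MatrixOrder ComplexOrder

namespace Matrix

variable {m 𝕜 : Type*} [Fintype m] [RCLike 𝕜]

theorem PosDef.isUnit_det [DecidableEq m] {A : Matrix m m 𝕜} (hA : A.PosDef) : IsUnit A.det :=
  (isUnit_iff_isUnit_det A).mp hA.isUnit

/-- Both sides are Schur complements of the block matrix `[[B, 1], [1, A⁻¹]]`. -/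
theorem PosDef.inv_anti [DecidableEq m] {A B : Matrix m m 𝕜} (hA : A.PosDef) (h : A ≤ B) :
    B⁻¹ ≤ A⁻¹ := by
  have hB : B.PosDef := by simpa using hA.add_posSemidef (le_iff.mp h)
  have := hA.inv.isUnit.invertible
  have := hB.isUnit.invertible
  have hblock := (PosDef.fromBlocks₂₂ B (1 : Matrix m m 𝕜) hA.inv).mpr
    (by simpa [nonsing_inv_nonsing_inv _ hA.isUnit_det] using le_iff.mp h)
  simpa [le_iff] using (PosDef.fromBlocks₁₁ _ _ hB).mp hblock

theorem inv_smul_one [DecidableEq m] {c : 𝕜} (hc : c ≠ 0) :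
    (c • 1 : Matrix m m 𝕜)⁻¹ = c⁻¹ • 1 :=
  inv_eq_left_inv (by rw [smul_mul_smul_comm, inv_mul_cancel₀ hc, one_mul, one_smul])

theorem conjTranspose_mul_mul_le_of_le {n : Type*} [Fintype n] {A B : Matrix m m 𝕜} (h : A ≤ B)
    (C : Matrix m n 𝕜) : Cᴴ * A * C ≤ Cᴴ * B * C := by
  simpa [le_iff, Matrix.mul_sub, Matrix.sub_mul] using (le_iff.mp h).conjTranspose_mul_mul_same C

theorem PosDef.inv_mul_mul_inv_le_inv [DecidableEq m] {M X : Matrix m m 𝕜} (hM : M.PosDef)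
    (h : X ≤ M) : M⁻¹ * X * M⁻¹ ≤ M⁻¹ := by
  simpa [hM.inv.isHermitian.eq, nonsing_inv_mul _ hM.isUnit_det]
    using conjTranspose_mul_mul_le_of_le h M⁻¹

theorem PosDef.smul_inv_le_inv_mul_mul_inv [DecidableEq m] {M X : Matrix m m 𝕜} {c : ℝ}
    (hM : M.PosDef) (h : c • M ≤ X) : c • M⁻¹ ≤ M⁻¹ * X * M⁻¹ := by
  simpa [hM.inv.isHermitian.eq, nonsing_inv_mul _ hM.isUnit_det]
    using conjTranspose_mul_mul_le_of_le h M⁻¹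

theorem PosDef.transpose_inv [DecidableEq m] {M : Matrix m m ℝ} (hM : M.PosDef) : M⁻¹ᵀ = M⁻¹ :=
  (isHermitian_iff_isSymm.mp hM.inv.isHermitian).eq

theorem mul_mul_add_inv_eq_inv_add_mul_mul [DecidableEq m] {n α : Type*} [Fintype n]
    [DecidableEq n] [CommRing α] {P : Matrix n n α} {R : Matrix m m α} (B : Matrix m n α)
    (C : Matrix n m α) (hP : IsUnit P.det) (hR : IsUnit R.det)
    (hPR : IsUnit (P⁻¹ + C * R⁻¹ * B).det) (hBR : IsUnit (B * P * C + R).det) :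
    P * C * (B * P * C + R)⁻¹ = (P⁻¹ + C * R⁻¹ * B)⁻¹ * C * R⁻¹ := by
  have push : (P⁻¹ + C * R⁻¹ * B) * (P * C) = C * R⁻¹ * (B * P * C + R) := by
    have hCR : C * R⁻¹ * R = C := by rw [Matrix.mul_assoc, nonsing_inv_mul _ hR, Matrix.mul_one]
    rw [Matrix.add_mul, Matrix.mul_add, ← Matrix.mul_assoc P⁻¹, nonsing_inv_mul _ hP,
      Matrix.one_mul, hCR, add_comm]
    simp only [Matrix.mul_assoc]
  calc P * C * (B * P * C + R)⁻¹
      = (P⁻¹ + C * R⁻¹ * B)⁻¹ * ((P⁻¹ + C * R⁻¹ * B) * (P * C)) * (B * P * C + R)⁻¹ := by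
        rw [← Matrix.mul_assoc _ (P⁻¹ + C * R⁻¹ * B), nonsing_inv_mul _ hPR, Matrix.one_mul]
    _ = (P⁻¹ + C * R⁻¹ * B)⁻¹ * C * R⁻¹ := by
        rw [push, Matrix.mul_assoc, Matrix.mul_assoc (C * R⁻¹), mul_nonsing_inv _ hBR,
          Matrix.mul_one]
        simp only [Matrix.mul_assoc]

end Matrix

section Rayleigh

variable {n : ℕ} {M : Matrix (Fin n) (Fin n) ℝ}

theorem isCompact_setOf_dotProduct_self_eq_one : IsCompact {x : Fin n → ℝ | x ⬝ᵥ x = 1} := by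
  refine Metric.isCompact_of_isClosed_isBounded (isClosed_eq (by fun_prop) continuous_const) ?_
  refine (Metric.isBounded_closedBall (x := 0) (r := 1)).subset fun x (hx : x ⬝ᵥ x = 1) => ?_
  rw [mem_closedBall_zero_iff, pi_norm_le_iff_of_nonneg zero_le_one]
  intro i
  rw [Real.norm_eq_abs, ← sq_le_one_iff_abs_le_one, sq, ← hx]
  exact Finset.single_le_sum (f := fun j => x j * x j) (fun j _ => mul_self_nonneg (x j))
    (Finset.mem_univ i)

theorem setOf_rayleigh_eq_image :
    {r | ∃ x : Fin n → ℝ, x ⬝ᵥ x = 1 ∧ r = x ⬝ᵥ M *ᵥ x} =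
      (fun x => x ⬝ᵥ M *ᵥ x) '' {x | x ⬝ᵥ x = 1} := by
  ext r
  simp [eq_comm]

theorem dotProduct_mulVec_le_lamMax {x : Fin n → ℝ} (hx : x ⬝ᵥ x = 1) :
    x ⬝ᵥ M *ᵥ x ≤ lamMax M := by
  rw [lamMax, setOf_rayleigh_eq_image]
  exact le_csSup (isCompact_setOf_dotProduct_self_eq_one.image (by fun_prop)).bddAbove
    ⟨x, hx, rfl⟩

theorem lamMin_le_dotProduct_mulVec {x : Fin n → ℝ} (hx : x ⬝ᵥ x = 1) :
    lamMin M ≤ x ⬝ᵥ M *ᵥ x := by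
  rw [lamMin, setOf_rayleigh_eq_image]
  exact csInf_le (isCompact_setOf_dotProduct_self_eq_one.image (by fun_prop)).bddBelow
    ⟨x, hx, rfl⟩

theorem exists_dotProduct_self_eq_one [NeZero n] : ∃ x : Fin n → ℝ, x ⬝ᵥ x = 1 :=
  ⟨Pi.single 0 1, by simp⟩

theorem exists_dotProduct_mulVec_eq_mul {x : Fin n → ℝ} (hx : x ≠ 0) :
    ∃ u : Fin n → ℝ, u ⬝ᵥ u = 1 ∧
      ∀ M : Matrix (Fin n) (Fin n) ℝ, x ⬝ᵥ M *ᵥ x = (x ⬝ᵥ x) * (u ⬝ᵥ M *ᵥ u) := by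
  have hpos : 0 < x ⬝ᵥ x := by simpa using dotProduct_star_self_pos_iff.mpr hx
  set t := Real.sqrt (x ⬝ᵥ x)
  have ht : t * t = x ⬝ᵥ x := Real.mul_self_sqrt hpos.le
  have ht0 : t ≠ 0 := (Real.sqrt_pos.mpr hpos).ne'
  refine ⟨t⁻¹ • x, ?_, fun M => ?_⟩
  · simp only [smul_dotProduct, dotProduct_smul, smul_eq_mul, ← ht]
    field_simp
  · simp only [mulVec_smul, smul_dotProduct, dotProduct_smul, smul_eq_mul, ← ht]
    field_simp

theorem dotProduct_mulVec_le_of_le {A B : Matrix (Fin n) (Fin n) ℝ} (h : A ≤ B)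
    (x : Fin n → ℝ) : x ⬝ᵥ A *ᵥ x ≤ x ⬝ᵥ B *ᵥ x := by
  have := (le_iff.mp h).dotProduct_mulVec_nonneg x
  rwa [star_trivial, sub_mulVec, dotProduct_sub, sub_nonneg] at this

theorem dotProduct_smul_one_mulVec (c : ℝ) (x : Fin n → ℝ) :
    x ⬝ᵥ (c • 1 : Matrix (Fin n) (Fin n) ℝ) *ᵥ x = c * (x ⬝ᵥ x) := by
  rw [smul_mulVec, one_mulVec, dotProduct_smul, smul_eq_mul]

theorem lamMax_le_of_le_smul_one [NeZero n] {c : ℝ} (h : M ≤ c • 1) : lamMax M ≤ c := by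
  refine csSup_le (exists_dotProduct_self_eq_one.elim fun x hx => ⟨_, x, hx, rfl⟩) ?_
  rintro _ ⟨x, hx, rfl⟩
  simpa [dotProduct_smul_one_mulVec, hx] using dotProduct_mulVec_le_of_le h x

theorem le_lamMin_of_smul_one_le [NeZero n] {c : ℝ} (h : c • 1 ≤ M) : c ≤ lamMin M := by
  refine le_csInf (exists_dotProduct_self_eq_one.elim fun x hx => ⟨_, x, hx, rfl⟩) ?_
  rintro _ ⟨x, hx, rfl⟩
  simpa [dotProduct_smul_one_mulVec, hx] using dotProduct_mulVec_le_of_le h x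

theorem le_lamMax_smul_one (hM : M.IsHermitian) : M ≤ lamMax M • 1 := by
  rw [le_iff]
  refine PosSemidef.of_dotProduct_mulVec_nonneg
    ((isHermitian_one.smul (IsSelfAdjoint.all _)).sub hM) fun x => ?_
  rw [star_trivial, sub_mulVec, dotProduct_sub, dotProduct_smul_one_mulVec, sub_nonneg]
  rcases eq_or_ne x 0 with rfl | hx
  · simp
  obtain ⟨u, hu, hxu⟩ := exists_dotProduct_mulVec_eq_mul hx
  rw [hxu, mul_comm (lamMax M)]
  exact mul_le_mul_of_nonneg_left (dotProduct_mulVec_le_lamMax hu)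
    (by simpa using dotProduct_star_self_nonneg x)

theorem lamMin_smul_one_le (hM : M.IsHermitian) : lamMin M • 1 ≤ M := by
  rw [le_iff]
  refine PosSemidef.of_dotProduct_mulVec_nonneg
    (hM.sub (isHermitian_one.smul (IsSelfAdjoint.all _))) fun x => ?_
  rw [star_trivial, sub_mulVec, dotProduct_sub, dotProduct_smul_one_mulVec, sub_nonneg]
  rcases eq_or_ne x 0 with rfl | hx
  · simp
  obtain ⟨u, hu, hxu⟩ := exists_dotProduct_mulVec_eq_mul hx
  rw [hxu, mul_comm (lamMin M)]
  exact mul_le_mul_of_nonneg_left (lamMin_le_dotProduct_mulVec hu)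
    (by simpa using dotProduct_star_self_nonneg x)

theorem lamMin_le_lamMax [NeZero n] (M : Matrix (Fin n) (Fin n) ℝ) : lamMin M ≤ lamMax M :=
  let ⟨_, hx⟩ := exists_dotProduct_self_eq_one (n := n)
  (lamMin_le_dotProduct_mulVec hx).trans (dotProduct_mulVec_le_lamMax hx)

theorem lamMax_nonneg (hM : M.PosSemidef) : 0 ≤ lamMax M :=
  Real.sSup_nonneg fun _ ⟨x, _, hr⟩ => hr ▸ by simpa using hM.dotProduct_mulVec_nonneg x

theorem lamMin_pos [NeZero n] (hM : M.PosDef) : 0 < lamMin M := by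
  obtain ⟨r, hr, hrM⟩ := (CFC.exists_pos_algebraMap_le_iff hM.isHermitian.isSelfAdjoint).mpr
    fun _ hx => (isStrictlyPositive_iff_posDef.mpr hM).spectrum_pos hx
  rw [Algebra.algebraMap_eq_smul_one] at hrM
  exact hr.trans_le (le_lamMin_of_smul_one_le hrM)

theorem lamMax_pos [NeZero n] (hM : M.PosDef) : 0 < lamMax M :=
  (lamMin_pos hM).trans_le (lamMin_le_lamMax M)

theorem inv_le_inv_lamMin_smul_one [NeZero n] (hM : M.PosDef) : M⁻¹ ≤ (lamMin M)⁻¹ • 1 := by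
  have h := (PosDef.one.smul (lamMin_pos hM)).inv_anti (lamMin_smul_one_le hM.isHermitian)
  rwa [inv_smul_one (lamMin_pos hM).ne'] at h

theorem inv_lamMax_smul_one_le_inv [NeZero n] (hM : M.PosDef) : (lamMax M)⁻¹ • 1 ≤ M⁻¹ := by
  have h := hM.inv_anti (le_lamMax_smul_one hM.isHermitian)
  rwa [inv_smul_one (lamMax_pos hM).ne'] at h

/-- With `w = Cᵀ y` for a unit vector `y`, Cauchy–Schwarz gives
`(w ⬝ᵥ w)² = (y ⬝ᵥ C w)² ≤ |C w|² = w ⬝ᵥ (Cᵀ C) w`. -/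
theorem lamMin_mul_transpose_le_lamMax_transpose_mul {m : ℕ} [NeZero m]
    (C : Matrix (Fin m) (Fin n) ℝ) : lamMin (C * Cᵀ) ≤ lamMax (Cᵀ * C) := by
  obtain ⟨y, hy⟩ := exists_dotProduct_self_eq_one (n := m)
  obtain ⟨w, hw⟩ : ∃ w, Cᵀ *ᵥ y = w := ⟨_, rfl⟩
  have hyw : y ⬝ᵥ C *ᵥ w = w ⬝ᵥ w := by rw [dotProduct_mulVec, ← mulVec_transpose, hw]
  have hmin : lamMin (C * Cᵀ) ≤ w ⬝ᵥ w := by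
    have := lamMin_le_dotProduct_mulVec (M := C * Cᵀ) hy
    rwa [← mulVec_mulVec, hw, hyw] at this
  have hcs : (w ⬝ᵥ w) ^ 2 ≤ (C *ᵥ w) ⬝ᵥ (C *ᵥ w) :=
    calc (w ⬝ᵥ w) ^ 2 = (y ⬝ᵥ C *ᵥ w) ^ 2 := by rw [hyw]
      _ ≤ (y ⬝ᵥ y) * ((C *ᵥ w) ⬝ᵥ (C *ᵥ w)) := by
        simpa only [dotProduct, sq] using Finset.sum_mul_sq_le_sq_mul_sq Finset.univ y (C *ᵥ w)
      _ = (C *ᵥ w) ⬝ᵥ (C *ᵥ w) := by rw [hy, one_mul]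
  have hmax : (C *ᵥ w) ⬝ᵥ (C *ᵥ w) ≤ lamMax (Cᵀ * C) * (w ⬝ᵥ w) := by
    have := dotProduct_mulVec_le_of_le
      (le_lamMax_smul_one (by simpa using isHermitian_conjTranspose_mul_self C)) w
    rwa [dotProduct_smul_one_mulVec, ← mulVec_mulVec, dotProduct_mulVec,
      ← mulVec_transpose] at this
  have hw0 : 0 ≤ w ⬝ᵥ w := by simpa using dotProduct_star_self_nonneg w
  have hL : 0 ≤ lamMax (Cᵀ * C) :=
    lamMax_nonneg (by simpa using posSemidef_conjTranspose_mul_self C)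
  nlinarith

end Rayleigh

section Information

variable {n : ℕ} [NeZero n] {Q Q' S : Matrix (Fin n) (Fin n) ℝ}

theorem inv_add_le_inv_lamMin_smul_one (hQ : Q.PosSemidef) (hS : S.PosDef) :
    (Q + S)⁻¹ ≤ (lamMin S)⁻¹ • 1 :=
  (hS.inv_anti (le_add_of_nonneg_left hQ.nonneg)).trans (inv_le_inv_lamMin_smul_one hS)

theorem lamMax_inv_add_mul_mul_inv_add_le (hQ : Q.PosSemidef) (hS : S.PosDef) :
    lamMax ((Q + S)⁻¹ * S * (Q + S)⁻¹) ≤ (lamMin S)⁻¹ :=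
  lamMax_le_of_le_smul_one <|
    ((PosDef.posSemidef_add hQ hS).inv_mul_mul_inv_le_inv (le_add_of_nonneg_left hQ.nonneg)).trans
      (inv_add_le_inv_lamMin_smul_one hQ hS)

theorem trace_inv_add_mul_mul_inv_add_le (hQ : Q.PosSemidef) (hS : S.PosDef) :
    ((Q + S)⁻¹ * Q * (Q + S)⁻¹).trace ≤ S.trace / lamMin S ^ 2 := by
  have hS' : (lamMin S)⁻¹ • (1 : Matrix (Fin n) (Fin n) ℝ) ≤ (lamMin S ^ 2)⁻¹ • S := by
    have := smul_le_smul_of_nonneg_left (lamMin_smul_one_le hS.isHermitian)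
      (inv_nonneg.mpr (sq_nonneg (lamMin S)))
    rw [sq, mul_inv] at this ⊢
    rwa [smul_smul, inv_mul_cancel_right₀ (lamMin_pos hS).ne'] at this
  calc _ ≤ ((lamMin S ^ 2)⁻¹ • S).trace :=
        OrderHomClass.mono (tracePositiveLinearMap _ ℝ ℝ) <|
          ((PosDef.posSemidef_add hQ hS).inv_mul_mul_inv_le_inv
            (le_add_of_nonneg_right hS.posSemidef.nonneg)).trans
            ((inv_add_le_inv_lamMin_smul_one hQ hS).trans hS')
    _ = S.trace / lamMin S ^ 2 := by rw [trace_smul, smul_eq_mul, inv_mul_eq_div]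

theorem lamMin_div_lamMax_smul_inv_add_le (hQ : Q.PosSemidef) (hQQ' : Q ≤ Q') (hS : S.PosDef) :
    (lamMin S / lamMax (Q' + S)) • (Q' + S)⁻¹ ≤ (Q + S)⁻¹ * S * (Q + S)⁻¹ := by
  have hM := PosDef.posSemidef_add hQ hS
  have hN := PosDef.posSemidef_add (nonneg_iff_posSemidef.mp (hQ.nonneg.trans hQQ')) hS
  have hMN : Q + S ≤ Q' + S := add_le_add_left hQQ' S
  set c := lamMin S / lamMax (Q' + S)
  have hc : 0 ≤ c := div_nonneg (lamMin_pos hS).le (lamMax_pos hN).le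
  have hcM : c • (Q + S) ≤ S :=
    calc c • (Q + S) ≤ c • (lamMax (Q' + S) • 1) :=
          smul_le_smul_of_nonneg_left (hMN.trans (le_lamMax_smul_one hN.isHermitian)) hc
      _ = lamMin S • 1 := by rw [smul_smul, div_mul_cancel₀ _ (lamMax_pos hN).ne']
      _ ≤ S := lamMin_smul_one_le hS.isHermitian
  exact (smul_le_smul_of_nonneg_left (hM.inv_anti hMN) hc).trans
    (hM.smul_inv_le_inv_mul_mul_inv hcM)

end Information

section Kalman

def kalmanGain {m n : ℕ} (P : Matrix (Fin n) (Fin n) ℝ) (B : Matrix (Fin m) (Fin n) ℝ)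
    (R₀ : Matrix (Fin m) (Fin m) ℝ) : Matrix (Fin n) (Fin m) ℝ :=
  P * Bᵀ * (B * P * Bᵀ + R₀)⁻¹

variable {m n : ℕ} {P : Matrix (Fin n) (Fin n) ℝ} {R₀ : Matrix (Fin m) (Fin m) ℝ}

theorem posSemidef_transpose_mul_inv_mul (hR₀ : R₀.PosDef) (B : Matrix (Fin m) (Fin n) ℝ) :
    (Bᵀ * R₀⁻¹ * B).PosSemidef := by
  simpa using hR₀.inv.posSemidef.conjTranspose_mul_mul_same B

theorem kalmanGain_eq (hP : P.PosDef) (hR₀ : R₀.PosDef) (B : Matrix (Fin m) (Fin n) ℝ) :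
    kalmanGain P B R₀ = (P⁻¹ + Bᵀ * R₀⁻¹ * B)⁻¹ * Bᵀ * R₀⁻¹ := by
  have hBPB : (B * P * Bᵀ).PosSemidef := by
    simpa using hP.posSemidef.mul_mul_conjTranspose_same B
  exact mul_mul_add_inv_eq_inv_add_mul_mul B Bᵀ hP.isUnit_det hR₀.isUnit_det
    (hP.inv.add_posSemidef (posSemidef_transpose_mul_inv_mul hR₀ B)).isUnit_det
    (PosDef.posSemidef_add hBPB hR₀).isUnit_det

theorem kalmanGain_mul (hP : P.PosDef) (hR₀ : R₀.PosDef) (B : Matrix (Fin m) (Fin n) ℝ) :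
    kalmanGain P B R₀ * B = (P⁻¹ + Bᵀ * R₀⁻¹ * B)⁻¹ * (Bᵀ * R₀⁻¹ * B) := by
  simp only [kalmanGain_eq hP hR₀, Matrix.mul_assoc]

theorem kalmanGain_mul_mul_transpose (hP : P.PosDef) (hR₀ : R₀.PosDef)
    (B : Matrix (Fin m) (Fin n) ℝ) :
    kalmanGain P B R₀ * R₀ * (kalmanGain P B R₀)ᵀ =
      (P⁻¹ + Bᵀ * R₀⁻¹ * B)⁻¹ * (Bᵀ * R₀⁻¹ * B) * (P⁻¹ + Bᵀ * R₀⁻¹ * B)⁻¹ := by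
  have hM := hP.inv.add_posSemidef (posSemidef_transpose_mul_inv_mul hR₀ B)
  simp only [kalmanGain_eq hP hR₀, transpose_mul, transpose_transpose, hM.transpose_inv,
    hR₀.transpose_inv]
  simp only [Matrix.mul_assoc, mul_nonsing_inv_cancel_left R₀ _ hR₀.isUnit_det]

theorem one_sub_kalmanGain_mul_mul_transpose (hP : P.PosDef) (hR₀ : R₀.PosDef)
    (B : Matrix (Fin m) (Fin n) ℝ) :
    (1 - kalmanGain P B R₀ * B) * P * (1 - kalmanGain P B R₀ * B)ᵀ =
      (P⁻¹ + Bᵀ * R₀⁻¹ * B)⁻¹ * P⁻¹ * (P⁻¹ + Bᵀ * R₀⁻¹ * B)⁻¹ := by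
  have hM := hP.inv.add_posSemidef (posSemidef_transpose_mul_inv_mul hR₀ B)
  have hA : 1 - kalmanGain P B R₀ * B = (P⁻¹ + Bᵀ * R₀⁻¹ * B)⁻¹ * P⁻¹ := by
    rw [kalmanGain_mul hP hR₀, ← nonsing_inv_mul _ hM.isUnit_det, ← Matrix.mul_sub,
      add_sub_cancel_right]
  simp only [hA, transpose_mul, hM.transpose_inv, hP.transpose_inv]
  simp only [Matrix.mul_assoc, mul_nonsing_inv_cancel_left P _ hP.isUnit_det]

variable [NeZero m] [NeZero n]

theorem lamMin_mul_transpose_le_lamMax_mul_lamMax (hR₀ : R₀.PosDef)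
    (B : Matrix (Fin m) (Fin n) ℝ) :
    lamMin (B * Bᵀ) ≤ lamMax R₀ * lamMax (Bᵀ * R₀⁻¹ * B) := by
  have h : (lamMax R₀)⁻¹ • (Bᵀ * B) ≤ lamMax (Bᵀ * R₀⁻¹ * B) • 1 := by
    have := conjTranspose_mul_mul_le_of_le (inv_lamMax_smul_one_le_inv hR₀) B
    simp only [conjTranspose_eq_transpose_of_trivial, Matrix.mul_smul, Matrix.mul_one,
      smul_mul] at this
    exact this.trans (le_lamMax_smul_one (posSemidef_transpose_mul_inv_mul hR₀ B).isHermitian)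
  rw [inv_smul_le_iff_of_pos (lamMax_pos hR₀), smul_smul] at h
  exact (lamMin_mul_transpose_le_lamMax_transpose_mul B).trans (lamMax_le_of_le_smul_one h)

theorem lamMin_mul_lamMin_le_lamMax_mul_transpose (hR₀ : R₀.PosDef)
    (B : Matrix (Fin m) (Fin n) ℝ) :
    lamMin R₀ * lamMin (Bᵀ * R₀⁻¹ * B) ≤ lamMax (B * Bᵀ) := by
  have h : lamMin (Bᵀ * R₀⁻¹ * B) • 1 ≤ (lamMin R₀)⁻¹ • (Bᵀ * B) := by
    have := conjTranspose_mul_mul_le_of_le (inv_le_inv_lamMin_smul_one hR₀) B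
    simp only [conjTranspose_eq_transpose_of_trivial, Matrix.mul_smul, Matrix.mul_one,
      smul_mul] at this
    exact (lamMin_smul_one_le (posSemidef_transpose_mul_inv_mul hR₀ B).isHermitian).trans this
  rw [le_inv_smul_iff_of_pos (lamMin_pos hR₀), smul_smul] at h
  simpa using
    (le_lamMin_of_smul_one_le h).trans (lamMin_mul_transpose_le_lamMax_transpose_mul Bᵀ)

end Kalman

theorem statement13_general {d d₀ : ℕ} (hd : 1 ≤ d) (hd₀ : 1 ≤ d₀)
    (B : Matrix (Fin d₀) (Fin d) ℝ)
    (R : Matrix (Fin d) (Fin d) ℝ) (R₀ : Matrix (Fin d₀) (Fin d₀) ℝ)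
    (hR : R.PosDef) (hR₀ : R₀.PosDef)
    (S : Matrix (Fin d) (Fin d) ℝ) (hSdef : S = Bᵀ * R₀⁻¹ * B)
    (hS : S.PosDef) (hBBt : (B * Bᵀ).PosDef)
    (K : Matrix (Fin d) (Fin d) ℝ → Matrix (Fin d) (Fin d₀) ℝ)
    (hK : ∀ Q, K Q = Q * Bᵀ * (B * Q * Bᵀ + R₀)⁻¹)
    (Ahat Rhat : Matrix (Fin d) (Fin d) ℝ → Matrix (Fin d) (Fin d) ℝ)
    (hAhat : ∀ Q, Ahat Q = 1 - K Q * B)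
    (hRhat : ∀ Q, Rhat Q = K Q * R₀ * (K Q)ᵀ)
    (P : Matrix (Fin d) (Fin d) ℝ) (hP : P.PosDef) :
    K P * B = (P⁻¹ + S)⁻¹ * S ∧
    lamMax (Rhat P) ≤ (lamMax R₀ / lamMin (B * Bᵀ)) * (lamMax S / lamMin S) ^ 2 ∧
    Matrix.trace (Ahat P * P * (Ahat P)ᵀ) ≤ Matrix.trace S / lamMin S ^ 2 ∧
    ((P - R).PosSemidef →
      (Rhat P - (lamMin R₀ * lamMin S ^ 2 / (lamMax (B * Bᵀ) * lamMax (R⁻¹ + S))) •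
        (R⁻¹ + S)⁻¹).PosSemidef) := by
  have : NeZero d := NeZero.of_pos hd
  have : NeZero d₀ := NeZero.of_pos hd₀
  subst hSdef
  have hKP : K P = kalmanGain P B R₀ := hK P
  have hPinv := hP.inv.posSemidef
  have hRhatP := kalmanGain_mul_mul_transpose hP hR₀ B
  refine ⟨hKP ▸ kalmanGain_mul hP hR₀ B, ?_, ?_, fun hPR => ?_⟩
  · have hG := lamMin_mul_transpose_le_lamMax_mul_lamMax hR₀ B
    have hab := lamMin_le_lamMax (Bᵀ * R₀⁻¹ * B)
    have ha := lamMin_pos hS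
    have hrb := mul_pos (lamMax_pos hR₀) (lamMax_pos hS)
    rw [hRhat, hKP, hRhatP]
    refine (lamMax_inv_add_mul_mul_inv_add_le hPinv hS).trans ?_
    rw [div_pow, div_mul_div_comm, le_div_iff₀ (mul_pos (lamMin_pos hBBt) (pow_pos ha 2)),
      inv_mul_eq_div, div_le_iff₀ ha]
    nlinarith [mul_le_mul hG hab ha.le hrb.le]
  · rw [hAhat, hKP, one_sub_kalmanGain_mul_mul_transpose hP hR₀]
    exact trace_inv_add_mul_mul_inv_add_le hPinv hS
  · have hN := hR.inv.add hS
    have hc := lamMin_mul_lamMin_le_lamMax_mul_transpose hR₀ B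
    have hSN := mul_pos (lamMin_pos hS) (lamMax_pos hN)
    rw [← le_iff, hRhat, hKP, hRhatP]
    refine le_trans (smul_le_smul_of_nonneg_right ?_ hN.inv.posSemidef.nonneg)
      (lamMin_div_lamMax_smul_inv_add_le hPinv (hR.inv_anti (le_iff.mpr hPR)) hS)
    rw [div_le_div_iff₀ (mul_pos (lamMax_pos hBBt) (lamMax_pos hN)) (lamMax_pos hN)]
    nlinarith [mul_le_mul_of_nonneg_right hc hSN.le]

/-- Assume `S := Bᵀ R₀⁻¹ B` and `B Bᵀ` are positive definite.  Then
for every positive definite `P`, with `K(P) := P Bᵀ (B P Bᵀ + R₀)⁻¹`,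
`Â(P) := I − K(P)B` and `R̂(P) := K(P) R₀ K(P)ᵀ`:
(i) `K(P) B = (P⁻¹ + S)⁻¹ S`;
(ii) `λ_max(R̂(P)) ≤ (λ_max(R₀)/λ_min(B Bᵀ)) (λ_max(S)/λ_min(S))²`;
(iii) `Tr(Â(P) P Â(P)ᵀ) ≤ Tr(S)/λ_min(S)²`;
(iv) if `P ≥ R` in the Loewner order, then
`R̂(P) ≥ (λ_min(R₀) λ_min(S)² / (λ_max(B Bᵀ) λ_max(R⁻¹ + S))) (R⁻¹ + S)⁻¹`. -/
theorem statement13 {d d₀ : ℕ} (hd : 1 ≤ d) (hd₀ : 1 ≤ d₀)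
    (A : Matrix (Fin d) (Fin d) ℝ) (B : Matrix (Fin d₀) (Fin d) ℝ)
    (R : Matrix (Fin d) (Fin d) ℝ) (R₀ : Matrix (Fin d₀) (Fin d₀) ℝ)
    (hR : R.PosDef) (hR₀ : R₀.PosDef)
    (S : Matrix (Fin d) (Fin d) ℝ) (hSdef : S = Bᵀ * R₀⁻¹ * B)
    (hS : S.PosDef) (hBBt : (B * Bᵀ).PosDef)
    (K : Matrix (Fin d) (Fin d) ℝ → Matrix (Fin d) (Fin d₀) ℝ)
    (hK : ∀ Q, K Q = Q * Bᵀ * (B * Q * Bᵀ + R₀)⁻¹)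
    (Ahat Rhat : Matrix (Fin d) (Fin d) ℝ → Matrix (Fin d) (Fin d) ℝ)
    (hAhat : ∀ Q, Ahat Q = 1 - K Q * B)
    (hRhat : ∀ Q, Rhat Q = K Q * R₀ * (K Q)ᵀ)
    (P : Matrix (Fin d) (Fin d) ℝ) (hP : P.PosDef) :
    K P * B = (P⁻¹ + S)⁻¹ * S ∧
    lamMax (Rhat P) ≤ (lamMax R₀ / lamMin (B * Bᵀ)) * (lamMax S / lamMin S) ^ 2 ∧
    Matrix.trace (Ahat P * P * (Ahat P)ᵀ) ≤ Matrix.trace S / lamMin S ^ 2 ∧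
    ((P - R).PosSemidef →
      (Rhat P - (lamMin R₀ * lamMin S ^ 2 / (lamMax (B * Bᵀ) * lamMax (R⁻¹ + S))) •
        (R⁻¹ + S)⁻¹).PosSemidef) :=
  statement13_general hd hd₀ B R R₀ hR hR₀ S hSdef hS hBBt K hK Ahat Rhat hAhat hRhat P hP
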